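/- arXiv:2008.07036 — 2 statements merged into one kernel-verified Lean document; each statement's English description precedes it below -/
import Mathlib

section
/- Let 0 < η < 1/e. There exists a constant C > 0 such that for all real x, y with x ≠ y, the series ∑_{k=1}^∞ (sin(k x) − sin(k y))² / k³ converges and ∑_{k=1}^∞ (sin(k x) − sin(k y))² / k³ ≤ C·(x − y)²·κ̃₂(|x − y|). -/
/-!
With `r = |x - y|`, the `k`-th numerator is at most `min (k² r², 4)` since `sin` is
1-Lipschitz. Cutting the series at `N = ⌈1/r⌉`, the first `N` terms contribute at most
`r² · harmonic N ≤ r² (1 + log (1 + 1/r))` and the tail at most `4 · 1/(2N²) ≤ 2 r²`.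
Finally `κ̃₂(r) = log (1/r) ≥ 1` absorbs `log (1 + 1/r)` when `r ≤ η`, and `κ̃₂(r) ≥ 1/4`
when `r > η`, where `log (1 + 1/r) ≤ log (1 + 1/η)`.
-/

open Real

/-- `κ̃₂(x) = log(1/x)` for `0 < x ≤ η`, and for `x > η`,
`κ̃₂(x) = (((log(1/η))^{1/2} − (1/2)(log(1/η))^{−1/2})·x + (1/2)(log(1/η))^{−1/2}·η)² / x²`. -/
noncomputable def kappa2 (η x : ℝ) : ℝ :=
  if x ≤ η then Real.log (1 / x)
  else ((Real.sqrt (Real.log (1 / η)) - (1 / 2) * (Real.sqrt (Real.log (1 / η)))⁻¹) * x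
        + (1 / 2) * (Real.sqrt (Real.log (1 / η)))⁻¹ * η) ^ 2 / x ^ 2

open Finset

lemma one_div_add_one_pow_three_le {a : ℝ} (ha : 0 < a) :
    1 / (a + 1) ^ 3 ≤ 1 / (2 * a ^ 2) - 1 / (2 * (a + 1) ^ 2) := by
  rw [div_sub_div _ _ (by positivity) (by positivity),
    div_le_div_iff₀ (by positivity) (by positivity)]
  nlinarith [pow_pos ha 2, pow_pos ha 3, pow_pos ha 4]

lemma summable_one_div_nat_add_one_pow_three :
    Summable fun k : ℕ => 1 / ((k : ℝ) + 1) ^ 3 := by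
  simpa using (summable_nat_add_iff 1).mpr
    (Real.summable_one_div_nat_pow.mpr (by norm_num : 1 < 3))

lemma tsum_one_div_nat_add_pow_three_le {N : ℕ} (hN : 0 < N) :
    ∑' i : ℕ, 1 / (((i + N : ℕ) : ℝ) + 1) ^ 3 ≤ 1 / (2 * (N : ℝ) ^ 2) := by
  refine Real.tsum_le_of_sum_range_le (fun _ => by positivity) fun n => ?_
  set G : ℕ → ℝ := fun i => 1 / (2 * ((i + N : ℕ) : ℝ) ^ 2)
  have step (i : ℕ) : 1 / (((i + N : ℕ) : ℝ) + 1) ^ 3 ≤ G i - G (i + 1) := by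
    simpa only [G, Nat.add_right_comm i 1 N, Nat.cast_succ] using
      one_div_add_one_pow_three_le (a := ((i + N : ℕ) : ℝ)) (by positivity)
  calc ∑ i ∈ range n, 1 / (((i + N : ℕ) : ℝ) + 1) ^ 3
      ≤ ∑ i ∈ range n, (G i - G (i + 1)) := sum_le_sum fun i _ => step i
    _ = G 0 - G n := sum_range_sub' G n
    _ ≤ G 0 := sub_le_self _ (by positivity)
    _ = 1 / (2 * (N : ℝ) ^ 2) := by simp [G]

section

variable {c : ℕ → ℝ} {M r : ℝ}

lemma summable_div_pow_three (hc₀ : ∀ k, 0 ≤ c k) (hcM : ∀ k, c k ≤ M) :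
    Summable fun k : ℕ => c k / ((k : ℝ) + 1) ^ 3 :=
  (summable_one_div_nat_add_one_pow_three.mul_left M).of_nonneg_of_le
    (fun k => div_nonneg (hc₀ k) (by positivity))
    (fun k => by rw [mul_one_div]; gcongr; exact hcM k)

lemma sum_range_div_pow_three_le (hcr : ∀ k : ℕ, c k ≤ (((k : ℝ) + 1) * r) ^ 2) (N : ℕ) :
    ∑ k ∈ range N, c k / ((k : ℝ) + 1) ^ 3 ≤ r ^ 2 * (1 + log N) := by
  have hterm (k : ℕ) : c k / ((k : ℝ) + 1) ^ 3 ≤ r ^ 2 * ((k : ℝ) + 1)⁻¹ := by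
    calc c k / ((k : ℝ) + 1) ^ 3 ≤ (((k : ℝ) + 1) * r) ^ 2 / ((k : ℝ) + 1) ^ 3 := by
          gcongr; exact hcr k
      _ = r ^ 2 * ((k : ℝ) + 1)⁻¹ := by field_simp
  calc ∑ k ∈ range N, c k / ((k : ℝ) + 1) ^ 3
      ≤ ∑ k ∈ range N, r ^ 2 * ((k : ℝ) + 1)⁻¹ := sum_le_sum fun k _ => hterm k
    _ = r ^ 2 * harmonic N := by simp [harmonic, mul_sum]
    _ ≤ r ^ 2 * (1 + log N) := by gcongr; exact harmonic_le_one_add_log N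

lemma tsum_nat_add_div_pow_three_le (hc₀ : ∀ k, 0 ≤ c k) (hcM : ∀ k, c k ≤ M)
    {N : ℕ} (hN : 0 < N) :
    ∑' i : ℕ, c (i + N) / (((i + N : ℕ) : ℝ) + 1) ^ 3 ≤ M / (2 * (N : ℝ) ^ 2) := by
  have hM : 0 ≤ M := (hc₀ 0).trans (hcM 0)
  calc ∑' i : ℕ, c (i + N) / (((i + N : ℕ) : ℝ) + 1) ^ 3
      ≤ ∑' i : ℕ, M * (1 / (((i + N : ℕ) : ℝ) + 1) ^ 3) :=
        ((summable_nat_add_iff N).mpr (summable_div_pow_three hc₀ hcM)).tsum_le_tsum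
          (fun i => by rw [mul_one_div]; gcongr; exact hcM _)
          (((summable_nat_add_iff N).mpr summable_one_div_nat_add_one_pow_three).mul_left M)
    _ = M * ∑' i : ℕ, 1 / (((i + N : ℕ) : ℝ) + 1) ^ 3 := tsum_mul_left
    _ ≤ M * (1 / (2 * (N : ℝ) ^ 2)) := by gcongr; exact tsum_one_div_nat_add_pow_three_le hN
    _ = M / (2 * (N : ℝ) ^ 2) := mul_one_div M _

theorem tsum_div_pow_three_le (hr : 0 < r) (hc₀ : ∀ k, 0 ≤ c k) (hcM : ∀ k, c k ≤ M)
    (hcr : ∀ k : ℕ, c k ≤ (((k : ℝ) + 1) * r) ^ 2) :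
    ∑' k : ℕ, c k / ((k : ℝ) + 1) ^ 3 ≤ r ^ 2 * (1 + M / 2 + log (1 + 1 / r)) := by
  obtain ⟨N, hN, hrN, hNr⟩ : ∃ N : ℕ, 0 < N ∧ 1 / r ≤ N ∧ (N : ℝ) < 1 / r + 1 :=
    ⟨⌈1 / r⌉₊, Nat.ceil_pos.mpr (by positivity), Nat.le_ceil _,
      Nat.ceil_lt_add_one (by positivity)⟩
  have hM : 0 ≤ M := (hc₀ 0).trans (hcM 0)
  have head := sum_range_div_pow_three_le hcr N
  have tail := tsum_nat_add_div_pow_three_le hc₀ hcM hN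
  have hlog : log N ≤ log (1 + 1 / r) := log_le_log (by positivity) (by linarith)
  have hNr' : 1 / (N : ℝ) ≤ r := (one_div_le (by positivity) hr).mpr hrN
  have htail : M / (2 * (N : ℝ) ^ 2) ≤ r ^ 2 * (M / 2) :=
    calc M / (2 * (N : ℝ) ^ 2) = M / 2 * (1 / (N : ℝ)) ^ 2 := by ring
      _ ≤ M / 2 * r ^ 2 := by gcongr
      _ = r ^ 2 * (M / 2) := mul_comm _ _
  rw [← (summable_div_pow_three hc₀ hcM).sum_add_tsum_nat_add N]
  nlinarith

end

lemma sq_sin_sub_sin_le_four (a b : ℝ) : (sin a - sin b) ^ 2 ≤ 4 := by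
  nlinarith [neg_one_le_sin a, sin_le_one a, neg_one_le_sin b, sin_le_one b]

lemma sq_sin_sub_sin_le (a b : ℝ) : (sin a - sin b) ^ 2 ≤ (a - b) ^ 2 :=
  sq_le_sq.mpr (abs_sin_sub_sin_le a b)

lemma one_le_log_one_div {η : ℝ} (hη₀ : 0 < η) (hη₁ : η < 1 / exp 1) : 1 ≤ log (1 / η) :=
  (le_log_iff_exp_le (by positivity)).mpr ((lt_one_div hη₀ (exp_pos 1)).mp hη₁).le

section

variable {η r : ℝ}

lemma kappa2_of_le (h : r ≤ η) : kappa2 η r = log (1 / r) := if_pos h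

lemma one_fourth_le_kappa2 (hη : 0 < η) (hL : 1 ≤ log (1 / η)) (hr : 0 < r) :
    1 / 4 ≤ kappa2 η r := by
  by_cases h : r ≤ η
  · rw [kappa2_of_le h]
    linarith [log_le_log (by positivity) (one_div_le_one_div_of_le hr h)]
  rw [kappa2, if_neg h, le_div_iff₀ (by positivity)]
  set s := √(log (1 / η))
  have hs : 1 ≤ s := one_le_sqrt.mpr hL
  have hs' : s⁻¹ ≤ 1 := inv_le_one_of_one_le₀ hs
  have hbase : r / 2 ≤ (s - 1 / 2 * s⁻¹) * r + 1 / 2 * s⁻¹ * η := by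
    nlinarith [mul_le_mul_of_nonneg_right hs' hr.le, inv_nonneg.mpr (zero_le_one.trans hs)]
  nlinarith [pow_le_pow_left₀ (by positivity) hbase 2]

lemma le_mul_kappa2 (hη : 0 < η) (hL : 1 ≤ log (1 / η)) (hr : 0 < r) :
    3 + log (1 + 1 / r) ≤ 4 * (4 + log (1 + 1 / η)) * kappa2 η r := by
  have hlogη : 0 ≤ log (1 + 1 / η) := log_nonneg (le_add_of_nonneg_right (by positivity))
  by_cases h : r ≤ η
  · rw [kappa2_of_le h]
    have hκ1 : 1 ≤ log (1 / r) :=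
      hL.trans (log_le_log (by positivity) (one_div_le_one_div_of_le hr h))
    have hlog : log (1 + 1 / r) ≤ 1 + log (1 / r) := by
      calc log (1 + 1 / r) ≤ log (2 * (1 / r)) := by
            gcongr; linarith [(log_pos_iff (by positivity)).mp (zero_lt_one.trans_le hκ1)]
        _ = log 2 + log (1 / r) := log_mul two_ne_zero (by positivity)
        _ ≤ 1 + log (1 / r) := by linarith [log_two_lt_d9]
    nlinarith
  · have hlog : log (1 + 1 / r) ≤ log (1 + 1 / η) := by
      gcongr; exact (not_le.mp h).le
    nlinarith [one_fourth_le_kappa2 hη hL hr]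

end

/-- Non-Lipschitz estimate for the diffusion coefficient with components
`sin(t)·k^{−3/2}·sin(kx)`: for `0 < η < 1/e` there is `C > 0` such that for all
`x ≠ y`, the series `∑_{k≥1} (sin(kx) − sin(ky))²/k³` converges and is bounded by
`C·(x−y)²·κ̃₂(|x−y|)`. -/
theorem sum_sin_diff_sq_div_cube_le (η : ℝ) (hη₀ : 0 < η) (hη₁ : η < 1 / Real.exp 1) :
    ∃ C : ℝ, 0 < C ∧ ∀ x y : ℝ, x ≠ y →
      Summable (fun k : ℕ =>
        (Real.sin ((k + 1 : ℝ) * x) - Real.sin ((k + 1 : ℝ) * y)) ^ 2 / ((k : ℝ) + 1) ^ 3) ∧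
      (∑' k : ℕ,
        (Real.sin ((k + 1 : ℝ) * x) - Real.sin ((k + 1 : ℝ) * y)) ^ 2 / ((k : ℝ) + 1) ^ 3) ≤
        C * (x - y) ^ 2 * kappa2 η |x - y| := by
  have hL := one_le_log_one_div hη₀ hη₁
  have hlogη : 0 ≤ log (1 + 1 / η) := log_nonneg (le_add_of_nonneg_right (by positivity))
  refine ⟨4 * (4 + log (1 + 1 / η)), by linarith, fun x y hxy => ?_⟩
  have hr : 0 < |x - y| := abs_pos.mpr (sub_ne_zero.mpr hxy)
  set c : ℕ → ℝ := fun k => (sin ((k + 1 : ℝ) * x) - sin ((k + 1 : ℝ) * y)) ^ 2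
  have hc₀ (k : ℕ) : 0 ≤ c k := sq_nonneg _
  have hc₄ (k : ℕ) : c k ≤ 4 := sq_sin_sub_sin_le_four _ _
  have hcr (k : ℕ) : c k ≤ (((k : ℝ) + 1) * |x - y|) ^ 2 :=
    calc c k ≤ ((k + 1 : ℝ) * x - (k + 1 : ℝ) * y) ^ 2 := sq_sin_sub_sin_le _ _
      _ = (((k : ℝ) + 1) * |x - y|) ^ 2 := by rw [← mul_sub, mul_pow, mul_pow, sq_abs]
  refine ⟨summable_div_pow_three hc₀ hc₄, ?_⟩
  calc ∑' k : ℕ, c k / ((k : ℝ) + 1) ^ 3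
      ≤ |x - y| ^ 2 * (1 + 4 / 2 + log (1 + 1 / |x - y|)) :=
        tsum_div_pow_three_le hr hc₀ hc₄ hcr
    _ ≤ |x - y| ^ 2 * (4 * (4 + log (1 + 1 / η)) * kappa2 η |x - y|) := by
        gcongr; linarith [le_mul_kappa2 hη₀ hL hr]
    _ = 4 * (4 + log (1 + 1 / η)) * (x - y) ^ 2 * kappa2 η |x - y| := by rw [sq_abs]; ring
end

section
/- Let 0 < η < 1/e. There exists a constant C > 0 such that for all real x, y with x ≠ y, the series ∑_{k=1}^∞ |sin²(k x) − sin²(k y)| / k³ converges and ( ∑_{k=1}^∞ |sin²(k x) − sin²(k y)| / k³ )² ≤ C·(x − y)²·κ̃₂(|x − y|). -/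
open Real

/-! The series is dominated termwise by `2 |x - y| / k²`, so its square is at most a constant
times `(x - y)²`; since `κ̃₂ ≥ 1/4` everywhere on `(0, ∞)` when `η < 1/e`, this already gives the
bound with a suitable `C`. -/

theorem abs_sin_sq_sub_sin_sq_le (a b : ℝ) : |sin a ^ 2 - sin b ^ 2| ≤ 2 * |a - b| := by
  have hsum : |sin a + sin b| ≤ 2 := by
    calc |sin a + sin b| ≤ |sin a| + |sin b| := abs_add_le _ _
      _ ≤ 1 + 1 := add_le_add (abs_sin_le_one a) (abs_sin_le_one b)
      _ = 2 := by norm_num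
  calc |sin a ^ 2 - sin b ^ 2| = |sin a + sin b| * |sin a - sin b| := by
        rw [← abs_mul]; ring_nf
    _ ≤ 2 * |a - b| := mul_le_mul hsum (abs_sin_sub_sin_le a b) (abs_nonneg _) zero_le_two

theorem abs_sin_sq_mul_sub_div_cube_le {n : ℝ} (hn : 0 < n) (x y : ℝ) :
    |sin (n * x) ^ 2 - sin (n * y) ^ 2| / n ^ 3 ≤ 2 * |x - y| / n ^ 2 := by
  have h := abs_sin_sq_sub_sin_sq_le (n * x) (n * y)
  rw [← mul_sub, abs_mul, abs_of_pos hn] at h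
  rw [div_le_div_iff₀ (by positivity) (by positivity)]
  calc |sin (n * x) ^ 2 - sin (n * y) ^ 2| * n ^ 2 ≤ 2 * (n * |x - y|) * n ^ 2 := by gcongr
    _ = 2 * |x - y| * n ^ 3 := by ring

theorem hasSum_one_div_succ_sq : HasSum (fun k : ℕ => 1 / ((k : ℝ) + 1) ^ 2) (π ^ 2 / 6) := by
  have h := (hasSum_nat_add_iff' 1).mpr hasSum_zeta_two
  simpa using h

theorem one_lt_log_one_div {η : ℝ} (hη₀ : 0 < η) (hη₁ : η < 1 / exp 1) : 1 < log (1 / η) := by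
  rw [lt_log_iff_exp_lt (by positivity), lt_one_div (exp_pos 1) hη₀]
  exact hη₁

theorem one_quarter_le_kappa2 {η t : ℝ} (hη₀ : 0 < η) (hη₁ : η < 1 / exp 1) (ht : 0 < t) :
    1 / 4 ≤ kappa2 η t := by
  have hL := one_lt_log_one_div hη₀ hη₁
  unfold kappa2
  split_ifs with htη
  · have : log (1 / η) ≤ log (1 / t) :=
      log_le_log (by positivity) (one_div_le_one_div_of_le ht htη)
    linarith
  · set s := √(log (1 / η))
    have hs : 1 < s := by rw [lt_sqrt zero_le_one]; simpa using hL
    have hs_inv : s⁻¹ < 1 := inv_lt_one_of_one_lt₀ hs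
    have ha : t / 2 ≤ (s - 1 / 2 * s⁻¹) * t + 1 / 2 * s⁻¹ * η := by
      have : 0 ≤ s⁻¹ := by positivity
      nlinarith
    rw [le_div_iff₀ (by positivity)]
    nlinarith [pow_le_pow_left₀ (by positivity) ha 2]

/-- Non-Lipschitz estimate for `g(t,x) = sin(t)·∑_{k≥1} sin²(kx)/k³`: for
`0 < η < 1/e` there is `C > 0` such that for all `x ≠ y`, the series
`∑_{k≥1} |sin²(kx) − sin²(ky)|/k³` converges and the square of its sum is bounded by
`C·(x−y)²·κ̃₂(|x−y|)`. -/
theorem sum_sin_sq_diff_div_cube_le (η : ℝ) (hη₀ : 0 < η) (hη₁ : η < 1 / Real.exp 1) :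
    ∃ C : ℝ, 0 < C ∧ ∀ x y : ℝ, x ≠ y →
      Summable (fun k : ℕ =>
        |Real.sin ((k + 1 : ℝ) * x) ^ 2 - Real.sin ((k + 1 : ℝ) * y) ^ 2| / ((k : ℝ) + 1) ^ 3) ∧
      (∑' k : ℕ,
        |Real.sin ((k + 1 : ℝ) * x) ^ 2 - Real.sin ((k + 1 : ℝ) * y) ^ 2| / ((k : ℝ) + 1) ^ 3) ^ 2 ≤
        C * (x - y) ^ 2 * kappa2 η |x - y| := by
  refine ⟨4 * (π ^ 2 / 3) ^ 2, by positivity, fun x y hxy => ?_⟩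
  have hterm (k : ℕ) := abs_sin_sq_mul_sub_div_cube_le (n := (k : ℝ) + 1) (by positivity) x y
  have hmajorant : HasSum (fun k : ℕ => 2 * |x - y| / ((k : ℝ) + 1) ^ 2)
      (2 * |x - y| * (π ^ 2 / 6)) := by
    simpa only [mul_one_div] using hasSum_one_div_succ_sq.mul_left (2 * |x - y|)
  have hsummable := hmajorant.summable.of_nonneg_of_le (fun k => by positivity) hterm
  refine ⟨hsummable, ?_⟩
  have hle := hasSum_le hterm hsummable.hasSum hmajorant
  have hκ := one_quarter_le_kappa2 hη₀ hη₁ (abs_pos.mpr (sub_ne_zero.mpr hxy))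
  calc _ ≤ (2 * |x - y| * (π ^ 2 / 6)) ^ 2 :=
        pow_le_pow_left₀ (tsum_nonneg fun k => by positivity) hle 2
    _ = 4 * (π ^ 2 / 3) ^ 2 * (x - y) ^ 2 * (1 / 4) := by rw [mul_pow, mul_pow, sq_abs]; ring
    _ ≤ 4 * (π ^ 2 / 3) ^ 2 * (x - y) ^ 2 * kappa2 η |x - y| := by gcongr
end
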